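/- arXiv:1007.0902 — 2 statements merged into one kernel-verified Lean document; each statement's English description precedes it below -/
import Mathlib

section
/- Let d ≥ 3, N ≥ 1, let ℓ be a positive real with ℓ ≤ N/10, and let A ⊆ T = (Z/NZ)^d be a set of vertices such that for every x ∈ T: (1) the set A ∩ B(x,2ℓ) has a connected component of ℓ∞-diameter at least ℓ, and (2) any two connected components of A ∩ B(x,6ℓ) of ℓ∞-diameter at least ℓ are contained in the same connected component of A. Then A has exactly one connected component of ℓ∞-diameter at least ℓ. -/
open MeasureTheory Filter Classical
open scoped ENNReal NNReal

noncomputable section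

namespace Frag

/-! ### Graph-theoretic basics -/

/-- Two vertices of `Fin d → R` are adjacent if they differ in exactly one
coordinate, by `±1` (Euclidean distance one). -/
def adj {d : ℕ} {R : Type*} [AddGroupWithOne R] (x y : Fin d → R) : Prop :=
  x ≠ y ∧ ∃ i : Fin d, (y i = x i + 1 ∨ x i = y i + 1) ∧ ∀ j : Fin d, j ≠ i → x j = y j

/-- The discrete torus `(ℤ/Nℤ)^d`. -/
abbrev Torus (d N : ℕ) := Fin d → ZMod N

/-- The lattice `ℤ^d`. -/
abbrev Lat (d : ℕ) := Fin d → ℤ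

instance (n : ℕ) : MeasurableSpace (ZMod n) := ⊤

/-- The `ℓ∞`-distance on the torus. -/
def torusDist {d N : ℕ} (x y : Torus d N) : ℕ :=
  Finset.univ.sup fun i : Fin d => min (x i - y i).val (y i - x i).val

/-- The `ℓ∞`-distance on the lattice. -/
def latDist {d : ℕ} (x y : Lat d) : ℕ :=
  Finset.univ.sup fun i : Fin d => (x i - y i).natAbs

/-- Closed `ℓ∞`-ball in the torus. -/
def torusBall {d N : ℕ} (x : Torus d N) (r : ℝ) : Set (Torus d N) :=
  {y | (torusDist x y : ℝ) ≤ r}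

/-- Closed `ℓ∞`-ball in the lattice. -/
def latBall {d : ℕ} (x : Lat d) (r : ℝ) : Set (Lat d) :=
  {y | (latDist x y : ℝ) ≤ r}

/-- `x` and `y` are connected by a nearest-neighbour path staying in `S`. -/
def connectedIn {α : Type*} (rel : α → α → Prop) (S : Set α) (x y : α) : Prop :=
  ∃ (n : ℕ) (p : ℕ → α), p 0 = x ∧ p n = y ∧ (∀ k, k ≤ n → p k ∈ S) ∧
    ∀ k, k < n → rel (p k) (p (k + 1))

/-- The connected component of `x` inside `S`. -/
def compOf {α : Type*} (rel : α → α → Prop) (S : Set α) (x : α) : Set α :=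
  {y | connectedIn rel S x y}

/-- `S` is a connected set. -/
def IsConnSet {α : Type*} (rel : α → α → Prop) (S : Set α) : Prop :=
  ∀ x ∈ S, ∀ y ∈ S, connectedIn rel S x y

/-- External vertex boundary. -/
def extBdry {α : Type*} (rel : α → α → Prop) (S : Set α) : Set α :=
  {y | y ∉ S ∧ ∃ x ∈ S, rel x y}

/-- Internal vertex boundary. -/
def intBdry {α : Type*} (rel : α → α → Prop) (S : Set α) : Set α :=
  {x | x ∈ S ∧ ∃ y, y ∉ S ∧ rel x y}

/-- The cardinality of the largest connected component of `S`. -/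
def maxCompSize {α : Type*} (rel : α → α → Prop) (S : Set α) : ℕ :=
  sSup {n | ∃ x ∈ S, n = (compOf rel S x).ncard}

/-- The diameter of a set with respect to a distance. -/
def diamOf {α : Type*} (dist : α → α → ℕ) (S : Set α) : ℕ :=
  sSup {n | ∃ x ∈ S, ∃ y ∈ S, n = dist x y}

/-- The canonical graph isomorphism `φ` from `B(0, N/4) ⊆ (ℤ/Nℤ)^d` onto
`B(0, N/4) ⊆ ℤ^d`, given by the signed representative of each coordinate. -/
def torusToLat {d N : ℕ} (x : Torus d N) : Lat d :=
  fun i => if ((x i).val : ℝ) ≤ (N : ℝ) / 2 then ((x i).val : ℤ) else ((x i).val : ℤ) - (N : ℤ)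

/-! ### Discrete-time simple random walk -/

/-- One-step transition probability of the simple random walk. -/
def srwStep {d : ℕ} {R : Type*} [AddGroupWithOne R] (x y : Fin d → R) : ℝ≥0∞ :=
  if adj x y then ((2 * d : ℕ) : ℝ≥0∞)⁻¹ else 0

/-- `μ` is the law on path space of the discrete-time simple random walk with
initial distribution `init`, characterized by its cylinder probabilities. -/
def IsWalkLaw {d : ℕ} {R : Type*} [AddGroupWithOne R] [MeasurableSpace R]
    (μ : Measure (ℕ → (Fin d → R))) (init : (Fin d → R) → ℝ≥0∞) : Prop :=
  IsProbabilityMeasure μ ∧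
  ∀ (n : ℕ) (w : ℕ → (Fin d → R)),
    μ {ω | ∀ k, k ≤ n → ω k = w k} =
      init (w 0) * ∏ k ∈ Finset.range n, srwStep (w k) (w (k + 1))

/-- The uniform initial distribution on the torus. -/
def unifInit (d N : ℕ) : Torus d N → ℝ≥0∞ := fun _ => ((N : ℝ≥0∞) ^ d)⁻¹

/-- The initial distribution concentrated at `x`. -/
def pointInit {α : Type*} (x : α) : α → ℝ≥0∞ := fun y => if y = x then 1 else 0

/-- The set of sites visited in the first `t` steps. -/
def visited {α : Type*} (t : ℕ) (ω : ℕ → α) : Set α := {v | ∃ k, k ≤ t ∧ ω k = v}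

/-! ### Capacity and random interlacements on `ℤ^d` -/

/-- The event that the walk never returns to `V` after time `0`. -/
def escEvent {d : ℕ} (V : Set (Lat d)) : Set (ℕ → Lat d) :=
  {w | ∀ n, 1 ≤ n → w n ∉ V}

/-- `r` is the (simple random walk) capacity of `V ⊆ ℤ^d`:
`r = Σ_{x ∈ V} P_x[H̃_V = ∞]`. -/
def IsCap (d : ℕ) (V : Set (Lat d)) (r : ℝ) : Prop :=
  ∃ μ : Lat d → Measure (ℕ → Lat d),
    (∀ x, IsWalkLaw (μ x) (pointInit x)) ∧
    r = ∑ᶠ x ∈ V, ((μ x) (escEvent V)).toReal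

/-- `I` is a random interlacement at level `u` on the probability space `(Ω, P)`:
for every finite `V ⊆ ℤ^d`, `P[I ∩ V = ∅] = exp (−u · cap V)`. -/
def IsInterlacement (d : ℕ) (u : ℝ) {Ω : Type*} [MeasurableSpace Ω]
    (P : Measure Ω) (I : Ω → Set (Lat d)) : Prop :=
  IsProbabilityMeasure P ∧
  (∀ x : Lat d, MeasurableSet {ω | x ∈ I ω}) ∧
  ∀ V : Set (Lat d), V.Finite → ∀ r : ℝ, IsCap d V r →
    P {ω | ∀ x ∈ V, x ∉ I ω} = ENNReal.ofReal (Real.exp (-u * r))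

/-- `e = η(u)`, the probability that the origin lies in an infinite component of
the vacant set `V^u = ℤ^d ∖ I^u` of a random interlacement at level `u`. -/
def IsEta (d : ℕ) (u e : ℝ) : Prop :=
  ∃ (Ω : Type) (_ : MeasurableSpace Ω) (P : Measure Ω) (I : Ω → Set (Lat d)),
    IsInterlacement d u P I ∧
    e = (P {ω | (compOf adj ((I ω)ᶜ) (0 : Lat d)).Infinite}).toReal

/-- The critical level `u_* = inf {u ≥ 0 : η(u) = 0}`. -/
def uStar (d : ℕ) : ℝ := sInf {u | 0 ≤ u ∧ IsEta d u 0}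

/-- The probability of an event `E` about a random interlacement at level `u`. -/
def intProb (d : ℕ) (u : ℝ) (E : Set (Lat d) → Prop) : ℝ :=
  sSup {p | ∃ (Ω : Type) (_ : MeasurableSpace Ω) (P : Measure Ω) (I : Ω → Set (Lat d)),
    IsInterlacement d u P I ∧ p = (P {ω | E (I ω)}).toReal}

/-- The event that `B(0,L)` is connected to the external boundary of `B(0,2L)`
by a nearest-neighbour path in `S`. -/
def connAcross (d L : ℕ) (S : Set (Lat d)) : Prop :=
  ∃ x ∈ latBall (0 : Lat d) (L : ℝ), ∃ y ∈ extBdry adj (latBall (0 : Lat d) (2 * (L : ℝ))),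
    connectedIn adj S x y

/-- The critical level `u_** = inf {u ≥ 0 : α(u) > 0}`. -/
def uStarStar (d : ℕ) : ℝ :=
  sInf {u | 0 ≤ u ∧ ∃ a : ℝ, 0 < a ∧
    Tendsto (fun L : ℕ => (L : ℝ) ^ a * intProb d u fun I => connAcross d L Iᶜ)
      atTop (nhds 0)}

/-- `u` is a strongly supercritical level for random interlacements on `ℤ^d`. -/
def StronglySupercritical (d : ℕ) (u : ℝ) : Prop :=
  ∃ μ : ℝ, 0 < μ ∧
  ∃ (Ω : Type) (_ : MeasurableSpace Ω) (P : Measure Ω) (I : ℝ → Ω → Set (Lat d)),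
    (∀ v : ℝ, 0 ≤ v → IsInterlacement d v P (I v)) ∧
    (∀ v v' : ℝ, v ≤ v' → ∀ ω, I v ω ⊆ I v' ω) ∧
    ∃ N₀ : ℕ, ∀ N : ℕ, N₀ ≤ N →
      (1 - Real.exp (-(N : ℝ) ^ μ) ≤
        (P {ω | ∃ x ∈ latBall (0 : Lat d) (N : ℝ),
          (compOf adj ((I (u * (1 + μ)) ω)ᶜ) x).Infinite}).toReal) ∧
      (1 - Real.exp (-(N : ℝ) ^ μ) ≤
        (P {ω | ∀ S₁ S₂ : Set (Lat d),
            S₁ ⊆ (I (u * (1 - μ)) ω)ᶜ ∩ latBall 0 (N : ℝ) →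
            S₂ ⊆ (I (u * (1 - μ)) ω)ᶜ ∩ latBall 0 (N : ℝ) →
            IsConnSet adj S₁ → IsConnSet adj S₂ →
            (N : ℝ) / 8 ≤ (diamOf latDist S₁ : ℝ) →
            (N : ℝ) / 8 ≤ (diamOf latDist S₂ : ℝ) →
            ∃ x ∈ S₁, ∃ y ∈ S₂,
              connectedIn adj ((I (u * (1 + μ)) ω)ᶜ ∩ latBall 0 (2 * (N : ℝ))) x y}).toReal)

/-! ### Continuous-time walk -/

/-- Sample space for the continuous-time walk: a discrete path together with
the i.i.d. exponential interarrival gaps of the driving Poisson process. -/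
abbrev CTPath (d N : ℕ) := (ℕ → Torus d N) × (ℕ → ℝ)

/-- The number of jumps performed up to time `t`. -/
def nJumps (g : ℕ → ℝ) (t : ℝ) : ℕ := sSup {n | ∑ k ∈ Finset.range n, g k ≤ t}

/-- The position of the continuous-time walk at time `t`. -/
def ctPos {d N : ℕ} (ω : CTPath d N) (t : ℝ) : Torus d N := ω.1 (nJumps ω.2 t)

/-- `ν` is the law of an i.i.d. sequence of exponential random variables of
parameter `1`, characterized by its joint survival function. -/
def IsIIDExp (ν : Measure (ℕ → ℝ)) : Prop :=
  IsProbabilityMeasure ν ∧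
  ∀ (n : ℕ) (s : ℕ → ℝ), (∀ k, 0 ≤ s k) →
    ν {g | ∀ k, k ≤ n → s k < g k} =
      ENNReal.ofReal (Real.exp (-(∑ k ∈ Finset.range (n + 1), s k)))

/-- `P` is the law of the continuous-time simple random walk `Y_t = X_{N_t}`
with initial distribution `init`. -/
def IsCTWalk {d N : ℕ} (P : Measure (CTPath d N)) (init : Torus d N → ℝ≥0∞) : Prop :=
  ∃ (μ : Measure (ℕ → Torus d N)) (ν : Measure (ℕ → ℝ)),
    IsWalkLaw μ init ∧ IsIIDExp ν ∧ P = μ.prod ν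

/-- The entrance time `H_V = inf {t ≥ 0 : Y_t ∈ V}`. -/
def hitT {d N : ℕ} (V : Set (Torus d N)) (ω : CTPath d N) : ℝ :=
  sInf {t | 0 ≤ t ∧ ctPos ω t ∈ V}

/-- The entrance time to `V` after time `s`. -/
def hitTAfter {d N : ℕ} (V : Set (Torus d N)) (ω : CTPath d N) (s : ℝ) : ℝ :=
  sInf {t | s ≤ t ∧ ctPos ω t ∈ V}

/-- The exit time `T_V = inf {t ≥ 0 : Y_t ∉ V}`. -/
def exitT {d N : ℕ} (V : Set (Torus d N)) (ω : CTPath d N) : ℝ :=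
  sInf {t | 0 ≤ t ∧ ctPos ω t ∉ V}

/-- The regeneration time `t_* = (N log N)^2`. -/
def tstar (N : ℕ) : ℝ := ((N : ℝ) * Real.log N) ^ 2

/-- The first time `t ≥ s + t_*` such that the walk has avoided `B` during the
whole interval `[t − t_*, t]`. -/
def uEndAfter {d N : ℕ} (B : Set (Torus d N)) (ω : CTPath d N) (s : ℝ) : ℝ :=
  sInf {t | s + tstar N ≤ t ∧ ∀ r, t - tstar N ≤ r → r ≤ t → ctPos ω r ∉ B}

/-- The successive excursion times `(R_k, U_k)` between `A` and (long absences
from) `B`, with the convention `(R_0, U_0) = (0, 0)`. -/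
def excTimes {d N : ℕ} (A B : Set (Torus d N)) (ω : CTPath d N) : ℕ → ℝ × ℝ
  | 0 => (0, 0)
  | k + 1 =>
      let R := hitTAfter A ω (excTimes A B ω k).2
      (R, uEndAfter B ω R)

/-- The range of the continuous-time walk during the time interval `[a, b]`. -/
def ctRange {d N : ℕ} (ω : CTPath d N) (a b : ℝ) : Set (Torus d N) :=
  {v | ∃ t, a ≤ t ∧ t ≤ b ∧ ctPos ω t = v}

/-! ### The killed walk and the quasistationary distribution -/

/-- The action of the substochastic matrix `P^B` (walk killed on `B`) on a
vector `v`. -/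
def killedMul (d N : ℕ) (B : Set (Torus d N)) (v : Torus d N → ℝ) (x : Torus d N) : ℝ :=
  ∑ᶠ y : Torus d N, if y ∉ B ∧ adj x y then v y / (2 * d) else 0

/-- `l` is an eigenvalue of the killed transition matrix `P^B`. -/
def IsKilledEigenvalue (d N : ℕ) (B : Set (Torus d N)) (l : ℝ) : Prop :=
  ∃ v : Torus d N → ℝ, v ≠ 0 ∧ (∀ x ∈ B, v x = 0) ∧
    ∀ x, x ∉ B → killedMul d N B v x = l * v x

/-- `σ` is the quasistationary distribution on `T ∖ B`: the normalized
non-negative principal (Perron–Frobenius) eigenvector of `P^B`. -/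
def IsQSD (d N : ℕ) (B : Set (Torus d N)) (σ : Torus d N → ℝ) : Prop :=
  (∀ x, 0 ≤ σ x) ∧ (∀ x ∈ B, σ x = 0) ∧ (∑ᶠ x, σ x = 1) ∧
  ∃ l : ℝ, (∀ x, x ∉ B → killedMul d N B σ x = l * σ x) ∧
    ∀ l', IsKilledEigenvalue d N B l' → l' ≤ l

/-- The Dirichlet form of the simple random walk on the torus. -/
def dirichlet (d N : ℕ) (g : Torus d N → ℝ) : ℝ :=
  (1 / 2) * ∑ᶠ x : Torus d N, ∑ᶠ y : Torus d N,
    if adj x y then (g x - g y) ^ 2 / (2 * d * (N : ℝ) ^ d) else 0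

end Frag

/-! Pick in every ball `B(x, 2ℓ)` an anchor `F x` lying in a component of `A ∩ B(x, 2ℓ)`
of diameter `≥ ℓ`. For neighbouring centres `x, x'` both anchors lie in such components of
`A ∩ B(x, 6ℓ)`, so (2) joins them in `A`; as the torus is connected, all anchors lie in one
component of `A`. A component of `A` of diameter `≥ ℓ` through `y` keeps diameter `≥ ℓ`
inside `B(y, 6ℓ)`: follow a path in it until it first reaches distance `⌈ℓ⌉` from `y`.
So (2) joins it to the anchor `F y`, hence to all anchors. -/

theorem ZMod.min_val_val_neg {N : ℕ} [NeZero N] (a : ZMod N) :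
    min a.val (-a).val = a.valMinAbs.natAbs := by
  rw [ZMod.valMinAbs_natAbs_eq_min, ZMod.neg_val]
  split_ifs with ha <;> simp [ha]

namespace Frag

open Relation

section Connectivity

variable {α : Type*} {rel : α → α → Prop} {S T : Set α} {x y z : α}

theorem connectedIn_iff_reflTransGen :
    connectedIn rel S x y ↔ x ∈ S ∧ ReflTransGen (fun a b => rel a b ∧ b ∈ S) x y := by
  constructor
  · rintro ⟨n, p, rfl, rfl, hpS, hpr⟩
    refine ⟨hpS 0 n.zero_le, ?_⟩
    suffices ∀ k ≤ n, ReflTransGen (fun a b => rel a b ∧ b ∈ S) (p 0) (p k) from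
      this n le_rfl
    intro k hk
    induction k with
    | zero => exact .refl
    | succ k ih => exact (ih (by omega)).tail ⟨hpr k (by omega), hpS (k + 1) hk⟩
  · rintro ⟨hx, h⟩
    induction h with
    | refl =>
      exact ⟨0, fun _ => x, rfl, rfl, fun _ _ => hx, fun k hk => absurd hk k.not_lt_zero⟩
    | @tail b c _ hbc ih =>
      obtain ⟨n, p, hp0, rfl, hpS, hpr⟩ := ih
      refine ⟨n + 1, fun k => if k ≤ n then p k else c, by simpa using hp0, by simp, ?_, ?_⟩
      · intro k hk
        dsimp only
        split_ifs with hkn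
        exacts [hpS k hkn, hbc.2]
      · intro k hk
        rcases Nat.lt_or_ge k n with hkn | hkn
        · simpa [hkn.le, Nat.succ_le_of_lt hkn] using hpr k hkn
        · obtain rfl : k = n := by omega
          simpa using hbc.1

theorem connectedIn.refl (hx : x ∈ S) : connectedIn rel S x x :=
  connectedIn_iff_reflTransGen.2 ⟨hx, .refl⟩

theorem connectedIn.trans (hxy : connectedIn rel S x y) (hyz : connectedIn rel S y z) :
    connectedIn rel S x z := by
  rw [connectedIn_iff_reflTransGen] at *
  exact ⟨hxy.1, hxy.2.trans hyz.2⟩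

theorem connectedIn.tail (hxy : connectedIn rel S x y) (hyz : rel y z) (hz : z ∈ S) :
    connectedIn rel S x z := by
  rw [connectedIn_iff_reflTransGen] at *
  exact ⟨hxy.1, hxy.2.tail ⟨hyz, hz⟩⟩

theorem connectedIn.symm (hrel : ∀ {a b}, rel a b → rel b a) (h : connectedIn rel S x y) :
    connectedIn rel S y x := by
  obtain ⟨hx, hr⟩ := connectedIn_iff_reflTransGen.1 h
  clear h
  rw [connectedIn_iff_reflTransGen]
  induction hr with
  | refl => exact ⟨hx, .refl⟩
  | tail _ hbc ih => exact ⟨hbc.2, .head ⟨hrel hbc.1, ih.1⟩ ih.2⟩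

theorem connectedIn.mono (hST : S ⊆ T) (h : connectedIn rel S x y) : connectedIn rel T x y :=
  let ⟨n, p, hp0, hpn, hpS, hpr⟩ := h
  ⟨n, p, hp0, hpn, fun k hk => hST (hpS k hk), hpr⟩

theorem connectedIn.mem_right (h : connectedIn rel S x y) : y ∈ S :=
  let ⟨n, _, _, hpn, hpS, _⟩ := h
  hpn ▸ hpS n le_rfl

theorem mem_compOf_self (hx : x ∈ S) : x ∈ compOf rel S x :=
  connectedIn.refl hx

theorem compOf_subset (x : α) : compOf rel S x ⊆ S :=
  fun _ h => connectedIn.mem_right h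

theorem compOf_mono (hST : S ⊆ T) (x : α) : compOf rel S x ⊆ compOf rel T x :=
  fun _ h => h.mono hST

theorem compOf_eq_of_connectedIn (hrel : ∀ {a b}, rel a b → rel b a)
    (h : connectedIn rel S x y) : compOf rel S x = compOf rel S y :=
  Set.ext fun _ => ⟨(h.symm hrel).trans, h.trans⟩

theorem connectedIn.stays_below_or_reaches {f : α → ℕ}
    (hf : ∀ {a b}, rel a b → f b ≤ f a + 1) {m : ℕ} (hx : f x < m)
    (h : connectedIn rel S x y) :
    connectedIn rel (S ∩ {z | f z < m}) x y ∨
      ∃ z, f z = m ∧ connectedIn rel (S ∩ {z | f z ≤ m}) x z := by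
  obtain ⟨hxS, hr⟩ := connectedIn_iff_reflTransGen.1 h
  clear h
  induction hr with
  | refl => exact .inl (.refl ⟨hxS, hx⟩)
  | @tail b c _ hbc ih =>
    obtain hb | hreach := ih
    · have hfc := hf hbc.1
      have hfb : f b < m := hb.mem_right.2
      by_cases hcm : f c < m
      · exact .inl (hb.tail hbc.1 ⟨hbc.2, hcm⟩)
      · have hb' := hb.mono (Set.inter_subset_inter_right S fun z (hz : f z < m) => hz.le)
        exact .inr ⟨c, by omega, hb'.tail hbc.1 ⟨hbc.2, show f c ≤ m by omega⟩⟩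
    · exact .inr hreach

end Connectivity

section Diameter

variable {α : Type*} {dist : α → α → ℕ} {S T : Set α}

theorem bddAbove_dists [Finite α] (S : Set α) :
    BddAbove {n | ∃ x ∈ S, ∃ y ∈ S, n = dist x y} :=
  ((Set.finite_range fun p : α × α => dist p.1 p.2).subset
    (by rintro _ ⟨x, -, y, -, rfl⟩; exact ⟨(x, y), rfl⟩)).bddAbove

theorem le_diamOf [Finite α] {x y : α} (hx : x ∈ S) (hy : y ∈ S) :
    dist x y ≤ diamOf dist S :=
  le_csSup (bddAbove_dists S) ⟨x, hx, y, hy, rfl⟩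

theorem diamOf_mono [Finite α] (hST : S ⊆ T) : diamOf dist S ≤ diamOf dist T :=
  csSup_le_csSup' (bddAbove_dists T) (by
    rintro _ ⟨x, hx, y, hy, rfl⟩
    exact ⟨x, hST hx, y, hST hy, rfl⟩)

theorem diamOf_le {n : ℕ} (h : ∀ x ∈ S, ∀ y ∈ S, dist x y ≤ n) : diamOf dist S ≤ n :=
  csSup_le' (by
    rintro _ ⟨x, hx, y, hy, rfl⟩
    exact h x hx y hy)

end Diameter

section TorusDist

variable {d N : ℕ}

theorem torusDist_self (x : Torus d N) : torusDist x x = 0 := by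
  simp [torusDist]

theorem torusDist_comm (x y : Torus d N) : torusDist x y = torusDist y x := by
  simp only [torusDist, min_comm]

theorem torusDist_eq_sup_valMinAbs [NeZero N] (x y : Torus d N) :
    torusDist x y = Finset.univ.sup fun i => (x i - y i).valMinAbs.natAbs := by
  unfold torusDist
  congr 1
  funext i
  rw [← ZMod.min_val_val_neg, neg_sub]

theorem torusDist_triangle [NeZero N] (x y z : Torus d N) :
    torusDist x z ≤ torusDist x y + torusDist y z := by
  simp only [torusDist_eq_sup_valMinAbs]
  refine Finset.sup_le fun i hi => ?_
  calc (x i - z i).valMinAbs.natAbs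
      = ((x i - y i) + (y i - z i)).valMinAbs.natAbs := by rw [sub_add_sub_cancel]
    _ ≤ (x i - y i).valMinAbs.natAbs + (y i - z i).valMinAbs.natAbs :=
        (ZMod.natAbs_valMinAbs_add_le _ _).trans (Int.natAbs_add_le _ _)
    _ ≤ _ := add_le_add (Finset.le_sup (f := fun i => (x i - y i).valMinAbs.natAbs) hi)
        (Finset.le_sup (f := fun i => (y i - z i).valMinAbs.natAbs) hi)

theorem torusDist_le_one {x y : Torus d N} (i : Fin d) (hi : y i = x i + 1 ∨ x i = y i + 1)
    (hj : ∀ j, j ≠ i → x j = y j) : torusDist x y ≤ 1 := by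
  refine Finset.sup_le fun j _ => ?_
  have hone : (1 : ZMod N).val ≤ 1 := by rw [ZMod.val_one_eq_one_mod]; exact Nat.mod_le _ _
  by_cases hji : j = i
  · subst hji
    rcases hi with h | h
    · exact (min_le_right _ _).trans (by rwa [h, add_sub_cancel_left])
    · exact (min_le_left _ _).trans (by rwa [h, add_sub_cancel_left])
  · simp [hj j hji]

theorem torusDist_le_one_of_adj {x y : Torus d N} (h : adj x y) : torusDist x y ≤ 1 :=
  let ⟨_, i, hi, hj⟩ := h
  torusDist_le_one i hi hj

theorem adj_symm {R : Type*} [AddGroupWithOne R] {x y : Fin d → R} (h : adj x y) : adj y x :=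
  ⟨h.1.symm, h.2.imp fun _ hi => ⟨hi.1.symm, fun j hj => (hi.2 j hj).symm⟩⟩

theorem reflTransGen_torusDist_le_one [NeZero N] (x y : Torus d N) :
    ReflTransGen (fun a b => torusDist a b ≤ 1) x y := by
  let M : AddSubmonoid (Torus d N) :=
    { carrier := {v | ∀ a, ReflTransGen (fun a b => torusDist a b ≤ 1) a (a + v)}
      zero_mem' := fun a => by simpa using ReflTransGen.refl
      add_mem' := fun {v w} hv hw a => by simpa [add_assoc] using (hv a).trans (hw (a + v)) }
  have hunit (i : Fin d) : (Pi.single i (1 : ZMod N) : Torus d N) ∈ M := fun a =>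
    .single (torusDist_le_one i (.inl (by simp)) fun j hj => by simp [hj])
  have hall (v : Torus d N) : v ∈ M := by
    rw [← Finset.univ_sum_single v]
    refine AddSubmonoid.sum_mem _ fun i _ => ?_
    have hv : (Pi.single i (v i) : Torus d N) =
        (v i).val • (Pi.single i (1 : ZMod N) : Torus d N) := by
      rw [← Pi.single_smul, nsmul_eq_mul, mul_one, ZMod.natCast_zmod_val]
    exact hv ▸ AddSubmonoid.nsmul_mem _ (hunit i) _
  simpa using hall (y - x) x

theorem torusBall_subset_torusBall [NeZero N] {x x' : Torus d N} {r r' : ℝ}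
    (h : (torusDist x x' : ℝ) + r ≤ r') : torusBall x' r ⊆ torusBall x r' :=
  fun z (hz : (torusDist x' z : ℝ) ≤ r) => show (torusDist x z : ℝ) ≤ r' by
    have : (torusDist x z : ℝ) ≤ torusDist x x' + torusDist x' z := by
      exact_mod_cast torusDist_triangle x x' z
    linarith

theorem torusBall_mono (x : Torus d N) {r r' : ℝ} (h : r ≤ r') :
    torusBall x r ⊆ torusBall x r' :=
  fun _ hz => le_trans hz h

end TorusDist

section LargeComponents

variable {d N : ℕ} {ℓ : ℝ} {S T : Set (Torus d N)} {y : Torus d N}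

def InLargeComp (ℓ : ℝ) (S : Set (Torus d N)) (y : Torus d N) : Prop :=
  y ∈ S ∧ ℓ ≤ (diamOf torusDist (compOf adj S y) : ℝ)

variable [NeZero N]

theorem InLargeComp.mono (h : InLargeComp ℓ S y) (hST : S ⊆ T) : InLargeComp ℓ T y :=
  ⟨hST h.1, h.2.trans (by exact_mod_cast diamOf_mono (compOf_mono hST y))⟩

theorem InLargeComp.one_le_two_mul (h : InLargeComp ℓ S y) (hℓ : 0 < ℓ) {x : Torus d N}
    {r : ℝ} (hS : S ⊆ torusBall x r) : 1 ≤ 2 * r := by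
  by_contra! hr
  have hdiam : diamOf torusDist (compOf adj S y) ≤ 0 := diamOf_le fun a ha b hb => by
    have ha' : (torusDist x a : ℝ) ≤ r := hS (compOf_subset y ha)
    have hb' : (torusDist x b : ℝ) ≤ r := hS (compOf_subset y hb)
    have hab : (torusDist a b : ℝ) ≤ torusDist x a + torusDist x b := by
      exact_mod_cast torusDist_comm x a ▸ torusDist_triangle a x b
    exact Nat.le_of_lt_succ (by exact_mod_cast (by linarith : (torusDist a b : ℝ) < 1))
  have : (diamOf torusDist (compOf adj S y) : ℝ) ≤ 0 := by exact_mod_cast hdiam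
  linarith [h.2]

theorem InLargeComp.inter_torusBall {A : Set (Torus d N)} (h : InLargeComp ℓ A y) (hℓ : 0 < ℓ)
    {r : ℝ} (hr : ℓ + 1 ≤ r) : InLargeComp ℓ (A ∩ torusBall y r) y := by
  set m := ⌈ℓ⌉₊
  have hmr : (m : ℝ) ≤ r := by linarith [Nat.ceil_lt_add_one hℓ.le]
  have hball : {z | torusDist y z ≤ m} ⊆ torusBall y r := fun z (hz : torusDist y z ≤ m) =>
    show (torusDist y z : ℝ) ≤ r from (Nat.cast_le.2 hz).trans hmr
  have hstep {a b : Torus d N} (hab : adj a b) : torusDist y b ≤ torusDist y a + 1 :=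
    (torusDist_triangle y a b).trans (add_le_add_right (torusDist_le_one_of_adj hab) _)
  have hy : torusDist y y < m := by simpa [torusDist_self, m] using hℓ
  have hyS : y ∈ A ∩ torusBall y r :=
    ⟨h.1, show (torusDist y y : ℝ) ≤ r by rw [torusDist_self]; push_cast; linarith⟩
  refine ⟨hyS, ?_⟩
  by_cases hreach : ∃ z, torusDist y z = m ∧
      connectedIn adj (A ∩ {z | torusDist y z ≤ m}) y z
  · obtain ⟨z, hzm, hz⟩ := hreach
    calc ℓ ≤ m := Nat.le_ceil ℓ
      _ = torusDist y z := by rw [hzm]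
      _ ≤ diamOf torusDist (compOf adj (A ∩ torusBall y r) y) := by
        exact_mod_cast le_diamOf (mem_compOf_self hyS)
          (hz.mono (Set.inter_subset_inter_right A hball))
  · have hsub : compOf adj A y ⊆ compOf adj (A ∩ torusBall y r) y := fun c hc =>
      ((connectedIn.stays_below_or_reaches (rel := adj) hstep hy hc).resolve_right
        hreach).mono (Set.inter_subset_inter_right A fun z (hz : torusDist y z < m) => hball hz.le)
    exact h.2.trans (by exact_mod_cast diamOf_mono hsub)

end LargeComponents

theorem unique_big_component_general
    (d N : ℕ) (hN : 1 ≤ N)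
    (ℓ : ℝ) (hℓ : 0 < ℓ)
    (A : Set (Torus d N))
    (h1 : ∀ x : Torus d N, ∃ y ∈ A ∩ torusBall x (2 * ℓ),
        ℓ ≤ (diamOf torusDist (compOf adj (A ∩ torusBall x (2 * ℓ)) y) : ℝ))
    (h2 : ∀ x : Torus d N, ∀ y ∈ A ∩ torusBall x (6 * ℓ), ∀ z ∈ A ∩ torusBall x (6 * ℓ),
        ℓ ≤ (diamOf torusDist (compOf adj (A ∩ torusBall x (6 * ℓ)) y) : ℝ) →
        ℓ ≤ (diamOf torusDist (compOf adj (A ∩ torusBall x (6 * ℓ)) z) : ℝ) →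
        connectedIn adj A y z) :
    ∃! C : Set (Torus d N),
      (∃ x ∈ A, C = compOf adj A x) ∧ ℓ ≤ (diamOf torusDist C : ℝ) := by
  have : NeZero N := ⟨by omega⟩
  choose F hF using h1
  have hanchor (x : Torus d N) : InLargeComp ℓ (A ∩ torusBall x (2 * ℓ)) (F x) := hF x
  have hjoin (x y z : Torus d N) (hy : InLargeComp ℓ (A ∩ torusBall x (6 * ℓ)) y)
      (hz : InLargeComp ℓ (A ∩ torusBall x (6 * ℓ)) z) : connectedIn adj A y z :=
    h2 x y hy.1 z hz.1 hy.2 hz.2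
  -- (1) rules out `ℓ < 1/4`, where the balls `B(x, 2ℓ)` are points.
  have hℓ4 : 1 ≤ 4 * ℓ := by
    linarith [(hanchor 0).one_le_two_mul hℓ Set.inter_subset_right]
  have h26 (x : Torus d N) : A ∩ torusBall x (2 * ℓ) ⊆ A ∩ torusBall x (6 * ℓ) :=
    Set.inter_subset_inter_right A (torusBall_mono x (by linarith))
  have hnear (x x' : Torus d N) (hxx' : torusDist x x' ≤ 1) :
      connectedIn adj A (F x) (F x') := by
    have hx' : (torusDist x x' : ℝ) ≤ 1 := by exact_mod_cast hxx'
    refine hjoin x _ _ ((hanchor x).mono (h26 x)) ((hanchor x').mono ?_)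
    exact Set.inter_subset_inter_right A (torusBall_subset_torusBall (by linarith))
  have hanchors (x x' : Torus d N) : connectedIn adj A (F x) (F x') := by
    induction reflTransGen_torusDist_le_one x x' with
    | refl => exact .refl (hanchor x).1.1
    | tail _ hbc ih => exact ih.trans (hnear _ _ hbc)
  have hto_anchor (y : Torus d N) (hy : InLargeComp ℓ A y) : connectedIn adj A y (F y) :=
    hjoin y y (F y) (hy.inter_torusBall hℓ (by linarith)) ((hanchor y).mono (h26 y))
  refine ⟨compOf adj A (F 0), ⟨⟨F 0, (hanchor 0).1.1, rfl⟩, ?_⟩, ?_⟩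
  · exact ((hanchor 0).mono Set.inter_subset_left).2
  rintro C ⟨⟨y, hyA, rfl⟩, hC⟩
  exact compOf_eq_of_connectedIn adj_symm ((hto_anchor y ⟨hyA, hC⟩).trans (hanchors y 0))

/-- **Lemma (local criterion for a unique large component).**
Let `ℓ ≤ N/10` and `A ⊆ T` be such that for every `x ∈ T`: (1) `A ∩ B(x,2ℓ)`
has a connected component of diameter at least `ℓ`, and (2) any two connected
components of `A ∩ B(x,6ℓ)` of diameter at least `ℓ` lie in the same component
of `A`.  Then `A` has exactly one connected component of diameter `≥ ℓ`. -/
theorem unique_big_component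
    (d N : ℕ) (hd : 3 ≤ d) (hN : 1 ≤ N)
    (ℓ : ℝ) (hℓ : 0 < ℓ) (hℓN : ℓ ≤ (N : ℝ) / 10)
    (A : Set (Torus d N))
    (h1 : ∀ x : Torus d N, ∃ y ∈ A ∩ torusBall x (2 * ℓ),
        ℓ ≤ (diamOf torusDist (compOf adj (A ∩ torusBall x (2 * ℓ)) y) : ℝ))
    (h2 : ∀ x : Torus d N, ∀ y ∈ A ∩ torusBall x (6 * ℓ), ∀ z ∈ A ∩ torusBall x (6 * ℓ),
        ℓ ≤ (diamOf torusDist (compOf adj (A ∩ torusBall x (6 * ℓ)) y) : ℝ) →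
        ℓ ≤ (diamOf torusDist (compOf adj (A ∩ torusBall x (6 * ℓ)) z) : ℝ) →
        connectedIn adj A y z) :
    ∃! C : Set (Torus d N),
      (∃ x ∈ A, C = compOf adj A x) ∧ ℓ ≤ (diamOf torusDist C : ℝ) :=
  unique_big_component_general d N hN ℓ hℓ A h1 h2

end Frag
end
end

section
/- Let d ≥ 3 and ε ∈ (0,1), and let B = B(0,N^{1−ε/2}) ⊂ T. Let λ^B_1 ≥ λ^B_2 be the two largest eigenvalues of the symmetric matrix P^B = ((2d)^{−1} 1_{x∼y})_{x,y ∈ T∖B}. There is a constant c = c(d,ε) > 0 such that for all sufficiently large N: λ^B_1 − λ^B_2 ≥ c N^{−2}. -/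
open MeasureTheory Filter Classical
open scoped ENNReal NNReal

noncomputable section

namespace Frag

/-- `l₂` is the second-largest eigenvalue (with multiplicity) of the killed
transition matrix `P^B`, characterized as the largest eigenvalue admitting an
eigenvector orthogonal to the principal eigenvector `v₁`. -/
def IsSecondEigenvalueGiven (d N : ℕ) (B : Set (Torus d N))
    (v₁ : Torus d N → ℝ) (l₂ : ℝ) : Prop :=
  (∃ v : Torus d N → ℝ, v ≠ 0 ∧ (∀ x ∈ B, v x = 0) ∧ (∑ᶠ x, v x * v₁ x) = 0 ∧
      ∀ x, x ∉ B → killedMul d N B v x = l₂ * v x) ∧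
  ∀ l' : ℝ,
    (∃ v : Torus d N → ℝ, v ≠ 0 ∧ (∀ x ∈ B, v x = 0) ∧ (∑ᶠ x, v x * v₁ x) = 0 ∧
      ∀ x, x ∉ B → killedMul d N B v x = l' * v x) → l' ≤ l₂


end Frag

/-!
Poincaré inequality: joining `x` to `x + z` by `d` straight segments along the coordinate
axes and applying Cauchy–Schwarz gives `‖u‖² ≤ d²N² ⟨u, (1 - P) u⟩` for every `u` of mean
zero on the torus. The combination `(∑ v) v₁ - (∑ v₁) v` of the principal eigenvector
`v₁ ≥ 0` and an eigenvector `v ⊥ v₁` of `P^B` has mean zero and its Rayleigh quotient splits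
along `v₁` and `v`, so `1 - λ₂ ≥ 1 / (d²N²)` as soon as `1 - λ₁ ≤ 1 / (d²N²)`.

The latter holds with room to spare: the ramp that vanishes on `B = B(0, R)`, grows linearly
and equals `1` outside `B(0, 2R)` has Dirichlet energy `O(R^(d-2))` and mass `≍ N^d`, so its
Rayleigh quotient is `1 - O(R^(d-2) N^(-d)) ≥ 1 - 1 / (2d²N²)` for `R = N^(1-ε/2)`, `d ≥ 3`
and `N` large. Hence `λ₁ - λ₂ ≥ 1 / (2d²N²)`.
-/

open Finset Matrix

theorem LinearMap.IsSymmetric.exists_hasEigenvalue_rayleigh_le {E : Type*}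
    [NormedAddCommGroup E] [InnerProductSpace ℝ E] [FiniteDimensional ℝ E] {T : E →ₗ[ℝ] E}
    (hT : T.IsSymmetric) {x : E} (hx : x ≠ 0) :
    ∃ μ : ℝ, Module.End.HasEigenvalue T μ ∧ inner ℝ (T x) x ≤ μ * ‖x‖ ^ 2 := by
  have : Nontrivial E := ⟨⟨x, 0, hx⟩⟩
  set T' := LinearMap.toContinuousLinearMap T
  have hbdd : BddAbove (Set.range fun y : { y : E // y ≠ 0 } => T'.rayleighQuotient y) :=
    ⟨‖T'‖, by rintro _ ⟨y, rfl⟩; exact (le_abs_self _).trans (T'.rayleighQuotient_le_norm y)⟩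
  refine ⟨_, hT.hasEigenvalue_iSup_of_finiteDimensional, ?_⟩
  rw [← div_le_iff₀ (by positivity)]
  exact le_ciSup hbdd ⟨x, hx⟩

theorem Matrix.IsHermitian.exists_mulVec_eq_smul_rayleigh_le {n : Type*} [Fintype n]
    [DecidableEq n] {M : Matrix n n ℝ} (hM : M.IsHermitian) {f : n → ℝ} (hf : f ≠ 0) :
    ∃ μ : ℝ, ∃ w : n → ℝ, w ≠ 0 ∧ M *ᵥ w = μ • w ∧ f ⬝ᵥ (M *ᵥ f) ≤ μ * (f ⬝ᵥ f) := by
  obtain ⟨μ, hμ, hle⟩ :=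
    (isSymmetric_toEuclideanLin_iff.mpr hM).exists_hasEigenvalue_rayleigh_le
      (x := WithLp.toLp 2 f) (by simpa using hf)
  obtain ⟨w, hw⟩ := hμ.exists_hasEigenvector
  refine ⟨μ, WithLp.ofLp w, by simpa using hw.2, ?_, ?_⟩
  · simpa using congrArg WithLp.ofLp (Module.End.mem_eigenspace_iff.mp hw.1)
  · rwa [← real_inner_self_eq_norm_sq, toLpLin_toLp, EuclideanSpace.inner_toLp_toLp,
      EuclideanSpace.inner_toLp_toLp, star_trivial, star_trivial, toLin'_apply] at hle

theorem dotProduct_self_pos {n : Type*} [Fintype n] {v : n → ℝ} (hv : v ≠ 0) :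
    0 < v ⬝ᵥ v :=
  (Fintype.sum_nonneg fun _ => mul_self_nonneg _).lt_of_ne' (dotProduct_self_eq_zero.not.mpr hv)

theorem sum_comp_add_right {G : Type*} [AddCommGroup G] [Fintype G] (f : G → ℝ) (a : G) :
    ∑ x, f (x + a) = ∑ x, f x :=
  Fintype.sum_equiv (Equiv.addRight a) _ _ fun _ => rfl

theorem sum_sq_sub_add_sum_le {G : Type*} [AddCommGroup G] [Fintype G] (u : G → ℝ)
    (w : ℕ → G) (L : ℕ) :
    ∑ x, (u x - u (x + ∑ k ∈ range L, w k)) ^ 2 ≤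
      L * ∑ k ∈ range L, ∑ x, (u x - u (x + w k)) ^ 2 := by
  set s : ℕ → G := fun k => ∑ j ∈ range k, w j
  have htel : ∀ x, u x - u (x + s L) = ∑ k ∈ range L, (u (x + s k) - u (x + s k + w k)) := by
    intro x
    calc u x - u (x + s L) = u (x + s 0) - u (x + s L) := by simp [s]
      _ = ∑ k ∈ range L, (u (x + s k) - u (x + s (k + 1))) :=
          (sum_range_sub' (fun k => u (x + s k)) L).symm
      _ = _ := by simp only [s, sum_range_succ, add_assoc]
  calc ∑ x, (u x - u (x + s L)) ^ 2
      ≤ ∑ x, L * ∑ k ∈ range L, (u (x + s k) - u (x + s k + w k)) ^ 2 := by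
        refine sum_le_sum fun x _ => ?_
        rw [htel]
        exact sq_sum_le_card_mul_sum_sq.trans_eq (by rw [card_range])
    _ = L * ∑ k ∈ range L, ∑ x, (u x - u (x + w k)) ^ 2 := by
        rw [← mul_sum, sum_comm]
        congr 1
        exact sum_congr rfl fun k _ => sum_comp_add_right (fun x => (u x - u (x + w k)) ^ 2) (s k)

theorem sum_sum_sq_sub_add_eq {G : Type*} [AddCommGroup G] [Fintype G] {u : G → ℝ}
    (hu : ∑ x, u x = 0) :
    ∑ z, ∑ x, (u x - u (x + z)) ^ 2 = 2 * Fintype.card G * (u ⬝ᵥ u) := by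
  have hx : ∀ x, ∑ z, (u x - u (x + z)) ^ 2 = Fintype.card G * u x ^ 2 + u ⬝ᵥ u := by
    intro x
    calc ∑ z, (u x - u (x + z)) ^ 2 = ∑ y, (u x - u y) ^ 2 :=
          Fintype.sum_equiv (Equiv.addLeft x) _ _ fun _ => rfl
      _ = ∑ y, (u x ^ 2 - 2 * u x * u y + u y * u y) :=
          sum_congr rfl fun y _ => by ring
      _ = Fintype.card G * u x ^ 2 - 2 * u x * ∑ y, u y + u ⬝ᵥ u := by
          rw [sum_add_distrib, sum_sub_distrib, ← mul_sum, sum_const, card_univ, nsmul_eq_mul]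
          rfl
      _ = Fintype.card G * u x ^ 2 + u ⬝ᵥ u := by rw [hu]; ring
  rw [sum_comm, sum_congr rfl fun x _ => hx x, sum_add_distrib, ← mul_sum, sum_const, card_univ,
    nsmul_eq_mul]
  simp only [dotProduct, sq]
  ring

theorem ZMod.two_ne_zero_of_three_le {N : ℕ} (hN : 3 ≤ N) : (2 : ZMod N) ≠ 0 := by
  rw [← Nat.cast_ofNat, Ne, ZMod.natCast_eq_zero_iff]
  exact fun h => by have := Nat.le_of_dvd two_pos h; omega

namespace Frag

section Adjacency

variable {d : ℕ} {R : Type*} [AddGroupWithOne R]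

theorem adj_comm {x y : Fin d → R} : adj x y ↔ adj y x := by
  constructor <;>
  · rintro ⟨hne, i, hi, hj⟩
    exact ⟨hne.symm, i, hi.symm, fun j hji => (hj j hji).symm⟩

theorem adj_iff_exists_single [NeZero (1 : R)] {x y : Fin d → R} :
    adj x y ↔ ∃ i, y = x + Pi.single i 1 ∨ y = x - Pi.single i 1 := by
  constructor
  · rintro ⟨-, i, hi, hj⟩
    refine ⟨i, hi.imp (fun hi => funext fun j => ?_) (fun hi => funext fun j => ?_)⟩ <;>
    · by_cases hji : j = i
      · subst hji
        simp [hi]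
      · simp [hji, hj j hji]
  · rintro ⟨i, rfl | rfl⟩
    · refine ⟨fun h => ?_, i, Or.inl (by simp), fun j hji => by simp [hji]⟩
      simpa using congrFun h i
    · refine ⟨fun h => ?_, i, Or.inr (by simp), fun j hji => by simp [hji]⟩
      simpa using (congrFun h i).symm

end Adjacency

theorem sum_adj_eq {d : ℕ} {R : Type*} [CommRing R] [Fintype R] [DecidableEq R]
    (h2 : (2 : R) ≠ 0) (x : Fin d → R) (g : (Fin d → R) → ℝ) :
    ∑ y, (if adj x y then g y else 0) =
      ∑ i, (g (x + Pi.single i 1) + g (x - Pi.single i 1)) := by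
  have : NeZero (1 : R) := ⟨fun h => h2 (by rw [← one_add_one_eq_two, h, add_zero])⟩
  set nbr : Fin d ⊕ Fin d → (Fin d → R) :=
    Sum.elim (fun i => x + Pi.single i 1) (fun i => x - Pi.single i 1)
  have hnbr : Function.Injective nbr := by
    rintro (i | i) (j | j) h <;> have hi := congrFun h i <;> by_cases hij : j = i <;>
      simp [nbr, hij] at hi ⊢
    · exact h2 (by linear_combination hi)
    · exact h2 (by linear_combination -hi)
  have hadj : univ.filter (adj x) = univ.image nbr := by
    ext y
    simp [adj_iff_exists_single, nbr, eq_comm, exists_or]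
  rw [← sum_filter, hadj, sum_image fun a _ b _ h => hnbr h, Fintype.sum_sum_type,
    sum_add_distrib]
  rfl

section WalkMatrix

variable {d N : ℕ}

def walkMatrix (d N : ℕ) : Matrix (Torus d N) (Torus d N) ℝ :=
  Matrix.of fun x y => if adj x y then (2 * d : ℝ)⁻¹ else 0

def killedMatrix (d N : ℕ) (B : Set (Torus d N)) : Matrix (Torus d N) (Torus d N) ℝ :=
  Matrix.of fun x y => if x ∉ B ∧ y ∉ B then walkMatrix d N x y else 0

theorem killedMatrix_isHermitian (B : Set (Torus d N)) : (killedMatrix d N B).IsHermitian := by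
  ext x y
  simp [killedMatrix, walkMatrix, adj_comm (x := x), and_comm]

variable [NeZero N]

theorem walkMatrix_mulVec_apply (hN : 3 ≤ N) (u : Torus d N → ℝ) (x : Torus d N) :
    (walkMatrix d N *ᵥ u) x =
      (2 * d : ℝ)⁻¹ * ∑ i, (u (x + Pi.single i 1) + u (x - Pi.single i 1)) := by
  simp only [mulVec, dotProduct, walkMatrix, of_apply, ite_mul, zero_mul]
  rw [sum_adj_eq (ZMod.two_ne_zero_of_three_le hN) x fun y => (2 * d : ℝ)⁻¹ * u y, mul_sum]
  simp only [mul_add]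

def energy (u : Torus d N → ℝ) : ℝ := ∑ i, ∑ x, (u (x + Pi.single i 1) - u x) ^ 2

theorem dotProduct_sub_walkMatrix_mulVec (hd : 0 < d) (hN : 3 ≤ N) (u : Torus d N → ℝ) :
    u ⬝ᵥ u - u ⬝ᵥ (walkMatrix d N *ᵥ u) = energy u / (2 * d) := by
  set C := ∑ i, ∑ x, u (x + Pi.single i 1) * u x
  have hback : ∀ i : Fin d,
      ∑ x, u x * u (x - Pi.single i 1) = ∑ x, u (x + Pi.single i 1) * u x :=
    fun i => by rw [← sum_comp_add_right _ (Pi.single i 1)]; simp [mul_comm]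
  have hP : u ⬝ᵥ (walkMatrix d N *ᵥ u) = (2 * d : ℝ)⁻¹ * (2 * C) := by
    calc u ⬝ᵥ (walkMatrix d N *ᵥ u)
        = (2 * d : ℝ)⁻¹ *
            ∑ i, ∑ x, (u (x + Pi.single i 1) * u x + u x * u (x - Pi.single i 1)) := by
          simp only [dotProduct, walkMatrix_mulVec_apply hN, mul_sum]
          rw [sum_comm]
          exact sum_congr rfl fun i _ => sum_congr rfl fun x _ => by ring
      _ = (2 * d : ℝ)⁻¹ * (2 * C) := by
          simp only [sum_add_distrib, hback, ← two_mul, ← mul_sum, C]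
  have hE : energy u = 2 * d * (u ⬝ᵥ u) - 2 * C := by
    calc energy u = ∑ i : Fin d, ∑ x,
          (u (x + Pi.single i 1) * u (x + Pi.single i 1) + u x * u x
            - 2 * (u (x + Pi.single i 1) * u x)) :=
          sum_congr rfl fun i _ => sum_congr rfl fun x _ => by ring
      _ = 2 * d * (u ⬝ᵥ u) - 2 * C := by
          simp only [sum_sub_distrib, sum_add_distrib, ← mul_sum,
            sum_comp_add_right (fun x => u x * u x)]
          simp [dotProduct, ← two_mul, mul_assoc, C]
  rw [hP, hE]
  field_simp

theorem killedMul_eq_walkMatrix_mulVec {B : Set (Torus d N)} {v : Torus d N → ℝ}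
    (hv : ∀ x ∈ B, v x = 0) : killedMul d N B v = walkMatrix d N *ᵥ v := by
  ext x
  rw [killedMul, finsum_eq_sum_of_fintype]
  refine sum_congr rfl fun y _ => ?_
  by_cases hy : y ∈ B <;> by_cases hxy : adj x y <;>
    simp [walkMatrix, hy, hxy, hv y, div_eq_inv_mul]

theorem killedMatrix_mulVec_apply (B : Set (Torus d N)) (v : Torus d N → ℝ) (x : Torus d N) :
    (killedMatrix d N B *ᵥ v) x = if x ∈ B then 0 else killedMul d N B v x := by
  rw [killedMul, finsum_eq_sum_of_fintype]
  by_cases hx : x ∈ B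
  · simp [mulVec, dotProduct, killedMatrix, hx]
  · simp only [mulVec, dotProduct, killedMatrix, walkMatrix, of_apply, hx, if_false]
    refine sum_congr rfl fun y _ => ?_
    by_cases hy : y ∈ B <;> by_cases hxy : adj x y <;> simp [hy, hxy, div_eq_inv_mul]

theorem dotProduct_walkMatrix_mulVec_eq {B : Set (Torus d N)} {u v : Torus d N → ℝ} {l : ℝ}
    (hu : ∀ x ∈ B, u x = 0) (hv : ∀ x ∈ B, v x = 0)
    (hvE : ∀ x, x ∉ B → killedMul d N B v x = l * v x) :
    u ⬝ᵥ (walkMatrix d N *ᵥ v) = l * (u ⬝ᵥ v) := by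
  rw [← killedMul_eq_walkMatrix_mulVec hv, dotProduct, dotProduct, mul_sum]
  refine sum_congr rfl fun x _ => ?_
  by_cases hx : x ∈ B
  · simp [hu x hx]
  · rw [hvE x hx]
    ring

theorem exists_isKilledEigenvalue_ge {B : Set (Torus d N)} {f : Torus d N → ℝ}
    (hfB : ∀ x ∈ B, f x = 0) (hf : f ≠ 0) (hpos : 0 < f ⬝ᵥ (walkMatrix d N *ᵥ f)) :
    ∃ l, IsKilledEigenvalue d N B l ∧ f ⬝ᵥ (walkMatrix d N *ᵥ f) ≤ l * (f ⬝ᵥ f) := by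
  have hKf : f ⬝ᵥ (killedMatrix d N B *ᵥ f) = f ⬝ᵥ (walkMatrix d N *ᵥ f) := by
    rw [← killedMul_eq_walkMatrix_mulVec hfB]
    refine sum_congr rfl fun x _ => ?_
    by_cases hx : x ∈ B <;> simp [killedMatrix_mulVec_apply, hx, hfB x]
  obtain ⟨μ, w, hw, hμw, hle⟩ := (killedMatrix_isHermitian B).exists_mulVec_eq_smul_rayleigh_le hf
  rw [hKf] at hle
  have hμ : 0 < μ := pos_of_mul_pos_left (hpos.trans_le hle) (dotProduct_self_pos hf).le
  have hwB : ∀ x ∈ B, w x = 0 := fun x hx => by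
    simpa [killedMatrix_mulVec_apply, hx, hμ.ne'] using congrFun hμw x
  refine ⟨μ, ⟨w, hw, hwB, fun x hx => ?_⟩, hle⟩
  simpa [killedMatrix_mulVec_apply, hx] using congrFun hμw x

end WalkMatrix

section Poincare

variable {d N : ℕ} [NeZero N]

theorem sum_sq_sub_add_single_le (u : Torus d N → ℝ) (i : Fin d) (a : ZMod N) :
    ∑ x, (u x - u (x + Pi.single i a)) ^ 2 ≤
      N ^ 2 * ∑ x, (u (x + Pi.single i 1) - u x) ^ 2 := by
  have hsum : ∑ _k ∈ range a.val, (Pi.single i 1 : Torus d N) = Pi.single i a := by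
    ext j
    by_cases hj : j = i
    · subst hj; simp
    · simp [hj]
  have ha : (a.val : ℝ) ≤ N := by exact_mod_cast (ZMod.val_lt a).le
  have h := sum_sq_sub_add_sum_le u (fun _ => Pi.single i 1) a.val
  rw [hsum, sum_const, card_range, nsmul_eq_mul] at h
  refine h.trans ?_
  calc (a.val : ℝ) * (a.val * ∑ x, (u x - u (x + Pi.single i 1)) ^ 2)
      ≤ N * (N * ∑ x, (u x - u (x + Pi.single i 1)) ^ 2) := by gcongr
    _ = N ^ 2 * ∑ x, (u (x + Pi.single i 1) - u x) ^ 2 := by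
        simp only [sq, ← mul_assoc]
        congr 1
        exact sum_congr rfl fun x _ => by ring

theorem sum_sq_sub_add_le (u : Torus d N → ℝ) (z : Torus d N) :
    ∑ x, (u x - u (x + z)) ^ 2 ≤ d * ∑ i, ∑ x, (u x - u (x + Pi.single i (z i))) ^ 2 := by
  set w : ℕ → Torus d N := fun k => if h : k < d then Pi.single ⟨k, h⟩ (z ⟨k, h⟩) else 0
  have hw : ∀ i : Fin d, w i = Pi.single i (z i) := fun i => by simp [w]
  have h := sum_sq_sub_add_sum_le u w d
  rw [← Fin.sum_univ_eq_sum_range, ← Fin.sum_univ_eq_sum_range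
    (fun k => ∑ x, (u x - u (x + w k)) ^ 2)] at h
  simpa only [hw, univ_sum_single] using h

theorem two_mul_dotProduct_self_le_energy {u : Torus d N → ℝ} (hu : ∑ x, u x = 0) :
    2 * (u ⬝ᵥ u) ≤ d * N ^ 2 * energy u := by
  have hpath : ∀ z, ∑ x, (u x - u (x + z)) ^ 2 ≤ d * N ^ 2 * energy u := by
    intro z
    refine (sum_sq_sub_add_le u z).trans ?_
    rw [energy, mul_assoc, mul_sum (s := univ) (a := (N : ℝ) ^ 2)]
    gcongr with i
    exact sum_sq_sub_add_single_le u i (z i)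
  have hcard : (Fintype.card (Torus d N) : ℝ) = N ^ d := by simp
  have h := (sum_sum_sq_sub_add_eq hu).symm.trans_le (sum_le_sum fun z _ => hpath z)
  rw [sum_const, card_univ, nsmul_eq_mul, hcard] at h
  have hN : (0 : ℝ) < N ^ d := pow_pos (Nat.cast_pos.mpr (NeZero.pos N)) d
  refine le_of_mul_le_mul_left ?_ hN
  linarith

theorem dotProduct_self_le_of_sum_eq_zero (hd : 0 < d) (hN : 3 ≤ N) {u : Torus d N → ℝ}
    (hu : ∑ x, u x = 0) :
    u ⬝ᵥ u ≤ d ^ 2 * N ^ 2 * (u ⬝ᵥ u - u ⬝ᵥ (walkMatrix d N *ᵥ u)) := by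
  rw [dotProduct_sub_walkMatrix_mulVec hd hN]
  have hd' : (0 : ℝ) < d := by exact_mod_cast hd
  calc u ⬝ᵥ u ≤ d * N ^ 2 * energy u / 2 := by linarith [two_mul_dotProduct_self_le_energy hu]
    _ = d ^ 2 * N ^ 2 * (energy u / (2 * d)) := by field_simp

theorem one_le_mul_one_sub_of_orthogonal (hd : 0 < d) (hN : 3 ≤ N) {B : Set (Torus d N)}
    {v₁ v : Torus d N → ℝ} {l₁ l₂ : ℝ} (hv₁ : v₁ ≠ 0) (hv₁nn : ∀ x, 0 ≤ v₁ x)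
    (hv₁B : ∀ x ∈ B, v₁ x = 0) (hv₁E : ∀ x, x ∉ B → killedMul d N B v₁ x = l₁ * v₁ x)
    (hv : v ≠ 0) (hvB : ∀ x ∈ B, v x = 0) (hvv₁ : v ⬝ᵥ v₁ = 0)
    (hvE : ∀ x, x ∉ B → killedMul d N B v x = l₂ * v x)
    (hl₁ : d ^ 2 * N ^ 2 * (1 - l₁) ≤ 1) :
    1 ≤ d ^ 2 * N ^ 2 * (1 - l₂) := by
  set a := ∑ x, v x
  set b := ∑ x, v₁ x
  have hb : 0 < b := by
    obtain ⟨x, hx⟩ := Function.ne_iff.mp hv₁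
    exact sum_pos' (fun y _ => hv₁nn y) ⟨x, mem_univ x, (hv₁nn x).lt_of_ne' hx⟩
  set u := a • v₁ - b • v
  have hu : ∑ x, u x = 0 := by
    simp only [u, Pi.sub_apply, Pi.smul_apply, smul_eq_mul, sum_sub_distrib, ← mul_sum]
    ring
  have huB : ∀ x ∈ B, u x = 0 := fun x hx => by simp [u, hv₁B x hx, hvB x hx]
  have hv₁v : v₁ ⬝ᵥ v = 0 := by rwa [dotProduct_comm]
  have huv₁ : u ⬝ᵥ v₁ = a * (v₁ ⬝ᵥ v₁) := by simp [u, sub_dotProduct, hvv₁]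
  have huv : u ⬝ᵥ v = -(b * (v ⬝ᵥ v)) := by simp [u, sub_dotProduct, hv₁v]
  have huu : u ⬝ᵥ u = a ^ 2 * (v₁ ⬝ᵥ v₁) + b ^ 2 * (v ⬝ᵥ v) := by
    rw [show u ⬝ᵥ u = a * (u ⬝ᵥ v₁) - b * (u ⬝ᵥ v) by simp [u, dotProduct_sub], huv₁, huv]
    ring
  have huPu : u ⬝ᵥ (walkMatrix d N *ᵥ u) =
      a ^ 2 * l₁ * (v₁ ⬝ᵥ v₁) + b ^ 2 * l₂ * (v ⬝ᵥ v) := by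
    rw [show u ⬝ᵥ (walkMatrix d N *ᵥ u) =
        a * (u ⬝ᵥ (walkMatrix d N *ᵥ v₁)) - b * (u ⬝ᵥ (walkMatrix d N *ᵥ v)) by
          simp [u, mulVec_sub, mulVec_smul, dotProduct_sub],
      dotProduct_walkMatrix_mulVec_eq huB hv₁B hv₁E, dotProduct_walkMatrix_mulVec_eq huB hvB hvE,
      huv₁, huv]
    ring
  have hpoinc := dotProduct_self_le_of_sum_eq_zero hd hN hu
  rw [huu, huPu] at hpoinc
  have hA : 0 ≤ a ^ 2 * (v₁ ⬝ᵥ v₁) := mul_nonneg (sq_nonneg a) (dotProduct_star_self_nonneg v₁)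
  have hB : 0 < b ^ 2 * (v ⬝ᵥ v) := by have := dotProduct_self_pos hv; positivity
  have hv₁part := mul_le_mul_of_nonneg_right hl₁ hA
  refine le_of_mul_le_mul_left ?_ hB
  linarith

end Poincare

section TorusDist

variable {d N : ℕ} [NeZero N]

theorem torusDist_zero_eq (x : Torus d N) :
    torusDist 0 x = univ.sup fun i => (x i).valMinAbs.natAbs := by
  unfold torusDist
  congr 1
  funext i
  rw [ZMod.valMinAbs_natAbs_eq_min, Pi.zero_apply, zero_sub, sub_zero, ZMod.neg_val]
  split_ifs with h
  · simp [h]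
  · exact min_comm _ _

theorem torusDist_zero_add_le (x y : Torus d N) :
    torusDist 0 (x + y) ≤ torusDist 0 x + torusDist 0 y := by
  simp only [torusDist_zero_eq]
  exact Finset.sup_le fun i hi => (ZMod.natAbs_valMinAbs_add_le _ _).trans <|
    (Int.natAbs_add_le _ _).trans (add_le_add (le_sup (f := fun i => (x i).valMinAbs.natAbs) hi)
      (le_sup (f := fun i => (y i).valMinAbs.natAbs) hi))

theorem torusDist_zero_neg (x : Torus d N) : torusDist 0 (-x) = torusDist 0 x := by
  simp only [torusDist_zero_eq, Pi.neg_apply, ZMod.natAbs_valMinAbs_neg]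

theorem torusDist_zero_single_one_le (i : Fin d) :
    torusDist 0 (Pi.single i (1 : ZMod N)) ≤ 1 := by
  rw [torusDist_zero_eq]
  refine Finset.sup_le fun j _ => ?_
  by_cases hj : j = i
  · subst hj
    rw [Pi.single_eq_same, ZMod.valMinAbs_natAbs_eq_min, ZMod.val_one_eq_one_mod]
    exact (min_le_left _ _).trans (Nat.mod_le _ _)
  · simp [hj]

theorem abs_torusDist_add_single_sub_le (x : Torus d N) (i : Fin d) :
    |(torusDist 0 (x + Pi.single i 1) : ℝ) - torusDist 0 x| ≤ 1 := by
  have h₁ := torusDist_zero_add_le x (Pi.single i 1)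
  have h₂ := torusDist_zero_add_le (x + Pi.single i 1) (-Pi.single i 1)
  rw [add_neg_cancel_right, torusDist_zero_neg] at h₂
  have h₃ := torusDist_zero_single_one_le (N := N) i
  have h₄ : (torusDist 0 (x + Pi.single i 1) : ℝ) ≤ torusDist 0 x + 1 := by
    exact_mod_cast (by omega : torusDist 0 (x + Pi.single i 1) ≤ torusDist 0 x + 1)
  have h₅ : (torusDist 0 x : ℝ) ≤ torusDist 0 (x + Pi.single i 1) + 1 := by
    exact_mod_cast (by omega : torusDist 0 x ≤ torusDist 0 (x + Pi.single i 1) + 1)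
  rw [abs_le]
  constructor <;> linarith

theorem card_valMinAbs_le (k : ℕ) : #{a : ZMod N | a.valMinAbs.natAbs ≤ k} ≤ 2 * k + 1 := by
  have hsub : ({a : ZMod N | a.valMinAbs.natAbs ≤ k} : Finset (ZMod N)) ⊆
      (Icc (-(k : ℤ)) k).image (Int.cast : ℤ → ZMod N) := by
    intro a ha
    rw [mem_filter] at ha
    refine mem_image.mpr ⟨a.valMinAbs, mem_Icc.mpr ?_, ZMod.coe_valMinAbs a⟩
    omega
  refine (card_le_card hsub).trans (card_image_le.trans ?_)
  rw [Int.card_Icc]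
  omega

theorem card_torusDist_le (k : ℕ) : #{x : Torus d N | torusDist 0 x ≤ k} ≤ (2 * k + 1) ^ d := by
  have hsub : ({x : Torus d N | torusDist 0 x ≤ k} : Finset (Torus d N)) ⊆
      Fintype.piFinset fun _ => {a : ZMod N | a.valMinAbs.natAbs ≤ k} := by
    intro x hx
    rw [mem_filter, torusDist_zero_eq, Finset.sup_le_iff] at hx
    simpa [Fintype.mem_piFinset] using fun i => hx.2 i (mem_univ i)
  refine (card_le_card hsub).trans ?_
  rw [Fintype.card_piFinset, prod_const, card_univ, Fintype.card_fin]
  exact Nat.pow_le_pow_left (card_valMinAbs_le k) d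

theorem card_torusDist_le_floor {c : ℝ} (hc : 0 ≤ c) :
    (#{x : Torus d N | torusDist 0 x ≤ ⌊c⌋₊} : ℝ) ≤ (2 * c + 1) ^ d := by
  refine (Nat.cast_le.mpr (card_torusDist_le ⌊c⌋₊)).trans ?_
  push_cast
  gcongr
  exact Nat.floor_le hc

end TorusDist

section Ramp

variable {d N : ℕ}

def ramp (R : ℝ) (x : Torus d N) : ℝ := min 1 (max 0 ((torusDist 0 x : ℝ) - R) / R)

theorem ramp_eq_zero {R : ℝ} {x : Torus d N} (hx : (torusDist 0 x : ℝ) ≤ R) : ramp R x = 0 := by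
  simp [ramp, max_eq_left (sub_nonpos.mpr hx)]

theorem ramp_eq_one {R : ℝ} (hR : 0 < R) {x : Torus d N} (hx : 2 * R ≤ torusDist 0 x) :
    ramp R x = 1 := by
  rw [ramp, max_eq_right (by linarith), min_eq_left (by rw [le_div_iff₀ hR]; linarith)]

theorem abs_ramp_sub_le {R : ℝ} (hR : 0 < R) (x y : Torus d N) :
    |ramp R x - ramp R y| ≤ |(torusDist 0 x : ℝ) - torusDist 0 y| / R := by
  calc |ramp R x - ramp R y|
      ≤ |max 0 ((torusDist 0 x : ℝ) - R) / R - max 0 ((torusDist 0 y : ℝ) - R) / R| :=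
        (abs_min_sub_min_le_max _ _ _ _).trans (by simp)
    _ ≤ |(torusDist 0 x : ℝ) - torusDist 0 y| / R := by
        have := abs_max_sub_max_le_abs ((torusDist 0 x : ℝ) - R) ((torusDist 0 y : ℝ) - R) 0
        rw [max_comm _ (0 : ℝ), max_comm _ (0 : ℝ), sub_sub_sub_cancel_right] at this
        rw [← sub_div, abs_div, abs_of_pos hR]
        exact div_le_div_of_nonneg_right this hR.le

variable [NeZero N]

theorem energy_ramp_le {R : ℝ} (hR : 1 ≤ R) :
    energy (ramp R : Torus d N → ℝ) ≤ d * (7 * R) ^ d / R ^ 2 := by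
  have hR0 : 0 < R := by linarith
  set K := ⌊2 * R + 1⌋₊
  have hterm : ∀ (i : Fin d) (x : Torus d N), (ramp R (x + Pi.single i 1) - ramp R x : ℝ) ^ 2 ≤
      if torusDist 0 x ≤ K then 1 / R ^ 2 else 0 := by
    intro i x
    have hstep := abs_torusDist_add_single_sub_le x i
    split_ifs with hx
    · rw [← sq_abs, one_div, ← inv_pow]
      gcongr
      refine (abs_ramp_sub_le hR0 _ _).trans ?_
      rw [div_eq_mul_inv]
      exact (mul_le_of_le_one_left (inv_pos.mpr hR0).le hstep)
    · have hK : 2 * R + 1 < torusDist 0 x := by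
        have := Nat.lt_floor_add_one (2 * R + 1)
        exact this.trans_le (by exact_mod_cast (not_le.mp hx))
      rw [ramp_eq_one hR0 (by linarith [(abs_le.mp hstep).1]), ramp_eq_one hR0 (by linarith)]
      simp
  calc energy (ramp R : Torus d N → ℝ)
      ≤ ∑ _i : Fin d, ∑ x : Torus d N, if torusDist 0 x ≤ K then 1 / R ^ 2 else 0 :=
        sum_le_sum fun i _ => sum_le_sum fun x _ => hterm i x
    _ = d * (#{x : Torus d N | torusDist 0 x ≤ K} / R ^ 2) := by
        rw [sum_const, card_univ, Fintype.card_fin, nsmul_eq_mul, ← sum_filter, sum_const,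
          nsmul_eq_mul, mul_one_div]
    _ ≤ d * ((2 * (2 * R + 1) + 1) ^ d / R ^ 2) := by
        gcongr
        exact card_torusDist_le_floor (by positivity)
    _ ≤ d * (7 * R) ^ d / R ^ 2 := by
        rw [mul_div_assoc]
        gcongr
        linarith

theorem dotProduct_ramp_ge {R : ℝ} (hR : 1 ≤ R) :
    (N : ℝ) ^ d - (7 * R) ^ d ≤ ramp R ⬝ᵥ (ramp R : Torus d N → ℝ) := by
  have hR0 : 0 < R := by linarith
  set K := ⌊2 * R⌋₊
  have hfar : ∀ x : Torus d N,
      (1 - if torusDist 0 x ≤ K then 1 else 0 : ℝ) ≤ ramp R x * ramp R x := by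
    intro x
    split_ifs with hx
    · simpa using mul_self_nonneg (ramp R x)
    · rw [ramp_eq_one hR0 ((Nat.lt_floor_add_one _).le.trans (by exact_mod_cast not_le.mp hx))]
      norm_num
  calc (N : ℝ) ^ d - (7 * R) ^ d ≤ N ^ d - #{x : Torus d N | torusDist 0 x ≤ K} := by
        gcongr
        exact (card_torusDist_le_floor (by positivity)).trans (by gcongr; linarith)
    _ = ∑ x : Torus d N, (1 - if torusDist 0 x ≤ K then 1 else 0 : ℝ) := by
        simp [sum_sub_distrib, sum_boole]
    _ ≤ ramp R ⬝ᵥ ramp R := sum_le_sum fun x _ => hfar x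

theorem mul_one_sub_le_one_of_forall_isKilledEigenvalue_le (hd : 0 < d) (hN : 3 ≤ N) {R : ℝ}
    (hR : 1 ≤ R) (hRN : R ≤ N) (hsmall : 2 * d ^ 2 * (7 * R) ^ d * N ^ 2 ≤ N ^ d * R ^ 2) {l₁ : ℝ}
    (hl₁ : ∀ l, IsKilledEigenvalue d N (torusBall 0 R) l → l ≤ l₁) :
    2 * d ^ 2 * N ^ 2 * (1 - l₁) ≤ 1 := by
  set f : Torus d N → ℝ := ramp R
  have hd' : (1 : ℝ) ≤ d := by exact_mod_cast hd
  have hN' : (3 : ℝ) ≤ N := by exact_mod_cast hN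
  have hfar : 2 * (7 * R) ^ d ≤ N ^ d := by
    refine le_of_mul_le_mul_right ?_ (by positivity : (0 : ℝ) < N ^ 2)
    calc 2 * (7 * R) ^ d * N ^ 2 ≤ 2 * d ^ 2 * (7 * R) ^ d * N ^ 2 := by gcongr; nlinarith
      _ ≤ N ^ d * R ^ 2 := hsmall
      _ ≤ N ^ d * N ^ 2 := by gcongr
  have hff : N ^ d ≤ 2 * (f ⬝ᵥ f) := by linarith [dotProduct_ramp_ge (d := d) (N := N) hR]
  have hgap : 2 * d ^ 2 * N ^ 2 * (f ⬝ᵥ f - f ⬝ᵥ (walkMatrix d N *ᵥ f)) ≤ f ⬝ᵥ f := by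
    rw [dotProduct_sub_walkMatrix_mulVec hd hN]
    calc 2 * d ^ 2 * N ^ 2 * (energy f / (2 * d)) = d * N ^ 2 * energy f := by
          field_simp
      _ ≤ d * N ^ 2 * (d * (7 * R) ^ d / R ^ 2) := by gcongr; exact energy_ramp_le hR
      _ ≤ N ^ d / 2 := by
          rw [mul_div_assoc', div_le_div_iff₀ (by positivity) two_pos]
          nlinarith
      _ ≤ f ⬝ᵥ f := by linarith
  have hf : f ≠ 0 := fun h => by
    rw [h, zero_dotProduct] at hff
    linarith [pow_pos (by linarith : (0 : ℝ) < N) d]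
  have hfpos := dotProduct_self_pos hf
  have hpos : 0 < f ⬝ᵥ (walkMatrix d N *ᵥ f) := by
    by_contra! hP
    have hK : (2 : ℝ) ≤ 2 * d ^ 2 * N ^ 2 := by
      have h₁ : (1 : ℝ) ≤ d ^ 2 := one_le_pow₀ hd'
      have h₂ : (1 : ℝ) ≤ N ^ 2 := one_le_pow₀ (by linarith)
      nlinarith
    have : 2 * (f ⬝ᵥ f - f ⬝ᵥ (walkMatrix d N *ᵥ f)) ≤
        2 * d ^ 2 * N ^ 2 * (f ⬝ᵥ f - f ⬝ᵥ (walkMatrix d N *ᵥ f)) := by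
      gcongr
      linarith
    linarith
  obtain ⟨l, hl, hle⟩ := exists_isKilledEigenvalue_ge (fun x hx => ramp_eq_zero hx) hf hpos
  have hll₁ := mul_le_mul_of_nonneg_right (hl₁ l hl) hfpos.le
  refine le_of_mul_le_mul_right ?_ hfpos
  calc 2 * d ^ 2 * N ^ 2 * (1 - l₁) * (f ⬝ᵥ f)
      ≤ 2 * d ^ 2 * N ^ 2 * (f ⬝ᵥ f - f ⬝ᵥ (walkMatrix d N *ᵥ f)) := by
        rw [mul_assoc]
        gcongr
        linarith
    _ ≤ 1 * (f ⬝ᵥ f) := by linarith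

end Ramp

theorem eventually_two_mul_sq_mul_le {d : ℕ} (hd : 3 ≤ d) {ε : ℝ} (hε : 0 < ε) :
    ∀ᶠ N : ℕ in atTop, 2 * d ^ 2 * (7 * (N : ℝ) ^ (1 - ε / 2)) ^ d * N ^ 2 ≤
      N ^ d * ((N : ℝ) ^ (1 - ε / 2)) ^ 2 := by
  have hexp : 0 < ε / 2 * (d - 2 : ℝ) := by
    have : (3 : ℝ) ≤ d := by exact_mod_cast hd
    nlinarith
  have hlim := (tendsto_rpow_atTop hexp).comp tendsto_natCast_atTop_atTop
  filter_upwards [hlim.eventually_ge_atTop (2 * d ^ 2 * 7 ^ d), eventually_gt_atTop 0]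
    with N hlarge hN
  have hN' : (0 : ℝ) < N := by exact_mod_cast hN
  have key : (N : ℝ) ^ d * ((N : ℝ) ^ (1 - ε / 2)) ^ 2 =
      N ^ (ε / 2 * (d - 2 : ℝ)) * (((N : ℝ) ^ (1 - ε / 2)) ^ d * N ^ 2) := by
    rw [← Real.rpow_mul_natCast hN'.le, ← Real.rpow_mul_natCast hN'.le, ← Real.rpow_natCast,
      ← Real.rpow_two, ← Real.rpow_add hN', ← Real.rpow_add hN', ← Real.rpow_add hN']
    congr 1
    push_cast
    ring
  calc 2 * d ^ 2 * (7 * (N : ℝ) ^ (1 - ε / 2)) ^ d * N ^ 2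
      = (2 * d ^ 2 * 7 ^ d) * (((N : ℝ) ^ (1 - ε / 2)) ^ d * N ^ 2) := by ring
    _ ≤ N ^ (ε / 2 * (d - 2 : ℝ)) * (((N : ℝ) ^ (1 - ε / 2)) ^ d * N ^ 2) := by
        gcongr
        exact hlarge
    _ = _ := key.symm

/-- **Lemma (spectral gap of the killed walk).**
With `B = B(0, N^{1−ε/2})`, if `λ^B_1 ≥ λ^B_2` are the two largest eigenvalues
of `P^B`, then `λ^B_1 − λ^B_2 ≥ c N^{−2}` for all large `N`. -/
theorem killed_walk_spectral_gap
    (d : ℕ) (hd : 3 ≤ d) (ε : ℝ) (hε : 0 < ε ∧ ε < 1) :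
    ∃ c : ℝ, 0 < c ∧ ∃ N₀ : ℕ, ∀ N : ℕ, N₀ ≤ N →
      ∀ l₁ l₂ : ℝ, ∀ v₁ : Torus d N → ℝ,
        IsKilledEigenvalue d N (torusBall (0 : Torus d N) ((N : ℝ) ^ (1 - ε / 2))) l₁ →
        (∀ l' : ℝ,
          IsKilledEigenvalue d N (torusBall (0 : Torus d N) ((N : ℝ) ^ (1 - ε / 2))) l' →
          l' ≤ l₁) →
        v₁ ≠ 0 → (∀ x, 0 ≤ v₁ x) →
        (∀ x ∈ torusBall (0 : Torus d N) ((N : ℝ) ^ (1 - ε / 2)), v₁ x = 0) →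
        (∀ x, x ∉ torusBall (0 : Torus d N) ((N : ℝ) ^ (1 - ε / 2)) →
          killedMul d N (torusBall (0 : Torus d N) ((N : ℝ) ^ (1 - ε / 2))) v₁ x =
            l₁ * v₁ x) →
        IsSecondEigenvalueGiven d N (torusBall (0 : Torus d N) ((N : ℝ) ^ (1 - ε / 2))) v₁ l₂ →
        c * (N : ℝ) ^ (-(2 : ℝ)) ≤ l₁ - l₂ := by
  obtain ⟨N₀, hN₀⟩ := eventually_atTop.mp
    ((eventually_two_mul_sq_mul_le hd hε.1).and (eventually_ge_atTop 3))
  refine ⟨1 / (2 * d ^ 2), by positivity, N₀,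
    fun N hN l₁ l₂ v₁ _ hl₁ hv₁ hv₁nn hv₁B hv₁E hsec => ?_⟩
  obtain ⟨hsmall, hN3⟩ := hN₀ N hN
  have : NeZero N := ⟨by omega⟩
  have hN1 : (1 : ℝ) ≤ N := by exact_mod_cast (by omega : 1 ≤ N)
  have hR : 1 ≤ (N : ℝ) ^ (1 - ε / 2) := Real.one_le_rpow hN1 (by linarith)
  have hRN : (N : ℝ) ^ (1 - ε / 2) ≤ N :=
    (Real.rpow_le_rpow_of_exponent_le hN1 (by linarith : 1 - ε / 2 ≤ 1)).trans_eq
      (Real.rpow_one _)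
  have htop :=
    mul_one_sub_le_one_of_forall_isKilledEigenvalue_le (by omega) hN3 hR hRN hsmall hl₁
  obtain ⟨⟨v, hv, hvB, hvv₁, hvE⟩, -⟩ := hsec
  rw [finsum_eq_sum_of_fintype] at hvv₁
  have hsecond := one_le_mul_one_sub_of_orthogonal (by omega) hN3 hv₁ hv₁nn hv₁B hv₁E hv hvB hvv₁
    hvE (by nlinarith)
  rw [Real.rpow_neg (by positivity), Real.rpow_two, ← one_div, div_mul_div_comm, one_mul,
    div_le_iff₀ (by positivity)]
  linarith

end Frag
end
end
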